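/- Let X = (t, x₁, …, x_m): Σ → H^m_{-k} ⊂ ℝ^{m,1} be an isometric immersion as above, with H⃗_M = Δ_Σ X and hyperbolic mean curvature vector H⃗_H satisfying H⃗_M = H⃗_H − k⟨H⃗_M, X⟩X. Then pointwise on Σ: Σ_{i=1}^m (Δ_Σ x_i − ((n-1)k/2) x_i)² = |H⃗_H|² − (1/4)(n-1)²k + (Δ_Σ t − ((n-1)k/2) t)². In particular |H⃗_H|² − (1/4)(n-1)²k + (Δ_Σ t − ((n-1)k/2)t)² ≥ 0. -/
import Mathlib


/-- The Minkowski product `-dy₀² + Σᵢ dyᵢ²` on `ℝ^{m,1} = Fin (m+1) → ℝ`, index `0` timelike. -/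
def minkowskiProd (m : ℕ) (x y : Fin (m + 1) → ℝ) : ℝ :=
  -(x 0 * y 0) + ∑ i : Fin m, x i.succ * y i.succ

/-- for an isometric immersion `X = (t, x₁, …, x_m) : Σ → H^m_{-k} ⊂ ℝ^{m,1}` with
Minkowski mean curvature vector `H⃗_M = Δ_Σ X` and hyperbolic mean curvature vector `H⃗_H`
satisfying `H⃗_M = H⃗_H - k⟨H⃗_M,X⟩X`, using `⟨H⃗_M,X⟩ = -(n-1)`, `⟨X,X⟩ = -1/k` and
`⟨H⃗_H,X⟩ = 0`, one has pointwise
`Σᵢ (Δ_Σ xᵢ - ((n-1)k/2) xᵢ)² = |H⃗_H|² - ¼(n-1)²k + (Δ_Σ t - ((n-1)k/2) t)²`,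
and in particular the right-hand side is nonnegative.  Here `H⃗_M i.succ = Δ_Σ xᵢ` and
`H⃗_M 0 = Δ_Σ t`. -/
theorem hyperboloid_mean_curvature_identity (n m : ℕ) (k : ℝ) (hk : 0 < k)
    (HM HH X : Fin (m + 1) → ℝ)
    (hrel : HM = fun i => HH i - k * minkowskiProd m HM X * X i)
    (hHMX : minkowskiProd m HM X = -((n : ℝ) - 1))
    (hXX : minkowskiProd m X X = -(1 / k))
    (hHHX : minkowskiProd m HH X = 0) :
    (∑ i : Fin m, (HM i.succ - ((n : ℝ) - 1) * k / 2 * X i.succ) ^ 2)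
        = minkowskiProd m HH HH - (1 / 4) * ((n : ℝ) - 1) ^ 2 * k
            + (HM 0 - ((n : ℝ) - 1) * k / 2 * X 0) ^ 2 ∧
      0 ≤ minkowskiProd m HH HH - (1 / 4) * ((n : ℝ) - 1) ^ 2 * k
            + (HM 0 - ((n : ℝ) - 1) * k / 2 * X 0) ^ 2 := by
  have hk0 : k ≠ 0 := ne_of_gt hk
  have hrel' : HM = fun i => HH i + k * ((n : ℝ) - 1) * X i := by
    rw [hrel, hHMX]; funext i; ring
  subst hrel'
  simp only [minkowskiProd] at hXX hHHX ⊢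
  have hB : ∑ i : Fin m, HH i.succ * X i.succ = HH 0 * X 0 := by linarith
  have hC : ∑ i : Fin m, X i.succ * X i.succ = X 0 * X 0 - 1 / k := by linarith
  have hexp : ∀ i : Fin m,
      (HH i.succ + k * ((n : ℝ) - 1) * X i.succ
          - ((n : ℝ) - 1) * k / 2 * X i.succ) ^ 2
        = HH i.succ * HH i.succ
          + ((n : ℝ) - 1) * k * (HH i.succ * X i.succ)
          + (((n : ℝ) - 1) * k / 2) ^ 2 * (X i.succ * X i.succ) := by
    intro i; ring
  have key : (∑ i : Fin m, (HH i.succ + k * ((n : ℝ) - 1) * X i.succ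
          - ((n : ℝ) - 1) * k / 2 * X i.succ) ^ 2)
        = (∑ i : Fin m, HH i.succ * HH i.succ)
          + ((n : ℝ) - 1) * k * (HH 0 * X 0)
          + (((n : ℝ) - 1) * k / 2) ^ 2 * (X 0 * X 0 - 1 / k) := by
    rw [Finset.sum_congr rfl fun i _ => hexp i]
    rw [Finset.sum_add_distrib, Finset.sum_add_distrib, ← Finset.mul_sum,
      ← Finset.mul_sum, hB, hC]
  constructor
  · rw [key]; field_simp; ring
  · have h := key
    rw [show (∑ i : Fin m, HH i.succ * HH i.succ)
          + ((n : ℝ) - 1) * k * (HH 0 * X 0)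
          + (((n : ℝ) - 1) * k / 2) ^ 2 * (X 0 * X 0 - 1 / k)
        = -(HH 0 * HH 0) + ∑ i : Fin m, HH i.succ * HH i.succ
            - 1 / 4 * ((n : ℝ) - 1) ^ 2 * k
            + (HH 0 + k * ((n : ℝ) - 1) * X 0
                - ((n : ℝ) - 1) * k / 2 * X 0) ^ 2 by field_simp; ring] at h
    rw [← h]
    positivity
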